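/- arXiv:1910.12461 — 4 statements merged into one kernel-verified Lean document; each statement's English description precedes it below -/
import Mathlib

section
/- For any partition λ with parts λ_1 ≥ λ_2 ≥ … ≥ λ_ℓ and multiplicities f_j = #{i : λ_i = j}, and any positive integers k and d, the condition that λ_i − λ_{i+k} ≥ d for all 1 ≤ i ≤ ℓ − k is equivalent to the condition that f_j + f_{j+1} + ⋯ + f_{j+d−1} ≤ k for all j ≥ 1. -/
/-!
Both conditions are about how many parts fall into a window `[j, j + d)` of values. If more
than `k` parts lie in one window, the first and last of them are at least `k` positions apart,
so by monotonicity `λ_a - λ_{a+k} < d` for the first one, `a`. Conversely, if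
`λ_i - λ_{i+k} < d`, the `k + 1` parts `λ_i, …, λ_{i+k}` all lie in the window starting at
`λ_{i+k}`, which is a positive value because parts are positive.
-/

open Finset

theorem List.count_eq_card_filter_get {α : Type*} [DecidableEq α] (l : List α) (a : α) :
    l.count a = #{m : Fin l.length | l.get m = a} :=
  (Fin.card_filter_univ_eq_vector_get_eq_count a ⟨l, rfl⟩).symm

theorem List.sum_range_count_add_eq_card (l : List ℕ) (j d : ℕ) :
    ∑ t ∈ Finset.range d, l.count (j + t) =
      #{m : Fin l.length | l.get m ∈ Finset.Ico j (j + d)} := by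
  have hmaps : Set.MapsTo l.get ({m | l.get m ∈ Finset.Ico j (j + d)} : Finset _)
      (Finset.Ico j (j + d)) := fun m hm => by simpa using hm
  rw [card_eq_sum_card_fiberwise hmaps, sum_Ico_eq_sum_range, add_tsub_cancel_left]
  refine sum_congr rfl fun t ht => ?_
  rw [List.count_eq_card_filter_get]
  congr 1
  ext m
  simp only [Finset.mem_filter, Finset.mem_univ, true_and, Finset.mem_Ico,
    Finset.mem_range] at ht ⊢
  omega

theorem Fin.exists_add_le_of_lt_card {n k : ℕ} {s : Finset (Fin n)} (hs : k < #s) :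
    ∃ a ∈ s, ∃ b ∈ s, (a : ℕ) + k ≤ b := by
  have hne : s.Nonempty := card_pos.1 (by omega)
  refine ⟨s.min' hne, s.min'_mem hne, s.max' hne, s.max'_mem hne, ?_⟩
  have hcard : #s ≤ #(Icc (s.min' hne) (s.max' hne)) :=
    card_le_card fun m hm => mem_Icc.2 ⟨s.min'_le m hm, s.le_max' m hm⟩
  rw [Fin.card_Icc] at hcard
  omega

section Antitone

variable {n : ℕ} {f : Fin n → ℕ}

theorem card_filter_mem_Ico_le_of_add_le (hf : Antitone f) {k d : ℕ}
    (hgap : ∀ i (h1 : i < n) (h2 : i + k < n), f ⟨i + k, h2⟩ + d ≤ f ⟨i, h1⟩) (j : ℕ) :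
    #{m | f m ∈ Ico j (j + d)} ≤ k := by
  by_contra! hlt
  obtain ⟨a, ha, b, hb, hab⟩ := Fin.exists_add_le_of_lt_card hlt
  simp only [mem_filter, mem_univ, true_and, mem_Ico] at ha hb
  have hak : (a : ℕ) + k < n := hab.trans_lt b.isLt
  have hb_le : f b ≤ f ⟨a + k, hak⟩ := hf (Fin.mk_le_of_le_val hab)
  have hgap_a : f ⟨a + k, hak⟩ + d ≤ f a := hgap a a.isLt hak
  omega

theorem add_le_of_card_filter_mem_Ico_le (hf : Antitone f) {k d i : ℕ} (h1 : i < n)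
    (h2 : i + k < n) (hwin : #{m | f m ∈ Ico (f ⟨i + k, h2⟩) (f ⟨i + k, h2⟩ + d)} ≤ k) :
    f ⟨i + k, h2⟩ + d ≤ f ⟨i, h1⟩ := by
  by_contra! hlt
  have hsub : Icc (⟨i, h1⟩ : Fin n) ⟨i + k, h2⟩ ⊆
      ({m | f m ∈ Ico (f ⟨i + k, h2⟩) (f ⟨i + k, h2⟩ + d)} : Finset (Fin n)) := by
    intro m hm
    rw [mem_Icc] at hm
    simp only [mem_filter, mem_univ, true_and, mem_Ico]
    exact ⟨hf hm.2, (hf hm.1).trans_lt hlt⟩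
  have hcard := card_le_card hsub
  rw [Fin.card_Icc, Fin.val_mk, Fin.val_mk] at hcard
  omega

end Antitone

theorem stmt0_general (l : List ℕ) (hpos : ∀ x ∈ l, 0 < x) (hsort : l.Pairwise (· ≥ ·))
    (k d : ℕ) :
    (∀ i (h1 : i < l.length) (h2 : i + k < l.length),
        l.get ⟨i + k, h2⟩ + d ≤ l.get ⟨i, h1⟩)
      ↔ (∀ j : ℕ, 1 ≤ j → (∑ t ∈ Finset.range d, l.count (j + t)) ≤ k) := by
  have hanti : Antitone l.get := hsort.sortedGE.antitone_get
  simp only [List.sum_range_count_add_eq_card]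
  exact ⟨fun hgap j _ => card_filter_mem_Ico_le_of_add_le hanti hgap j,
    fun hwin i h1 h2 =>
      add_le_of_card_filter_mem_Ico_le hanti h1 h2 (hwin _ (hpos _ (l.get_mem _)))⟩

/-- For a partition (weakly decreasing list of positive integers),
the difference condition `λ_i − λ_{i+k} ≥ d` for all valid `i` is equivalent to
`f_j + f_{j+1} + ⋯ + f_{j+d−1} ≤ k` for all `j ≥ 1`, where `f_j` is the
multiplicity of `j`. -/
theorem stmt0 (l : List ℕ) (hpos : ∀ x ∈ l, 0 < x) (hsort : l.Pairwise (· ≥ ·))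
    (k d : ℕ) (hk : 0 < k) (hd : 0 < d) :
    (∀ i (h1 : i < l.length) (h2 : i + k < l.length),
        l.get ⟨i + k, h2⟩ + d ≤ l.get ⟨i, h1⟩)
      ↔ (∀ j : ℕ, 1 ≤ j → (∑ t ∈ Finset.range d, l.count (j + t)) ≤ k) :=
  stmt0_general l hpos hsort k d
end

section
/- In terms of the multiplicity vector (f_i)_{i≥1} of a partition λ, the condition that λ_i − λ_{i+2} = 3 implies λ_i ≠ λ_{i+1} (for all valid i), together with λ_i − λ_{i+2} ≥ 3 for all i, is equivalent to: f_j + f_{j+1} + f_{j+2} ≤ 2 for all j, and there is no j ≥ 1 with f_j ≥ 1, f_{j+1} = f_{j+2} = 0, and f_{j+3} ≥ 2. -/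
/-!
For a weakly decreasing list, positions and values are tied together by monotonicity: three
parts lie in a window `[j, j + 2]` of values exactly when some `λ_i, λ_{i+1}, λ_{i+2}` do, so
the window bound on multiplicities is (N2). Under (N2), two equal parts `j + 3` are necessarily
consecutive, followed by a part `≤ j`; so a part `j` below them forces `λ_i - λ_{i+2} = 3` with
`λ_i = λ_{i+1}`, and conversely such a triple leaves a gap: the values `j + 1, j + 2` do not
occur.
-/

namespace List

theorem forall_getElem!_iff {α : Type*} [Inhabited α] {l : List α}
    {P : α → α → α → Prop} :
    (∀ i, i + 2 < l.length → P l[i]! l[i+1]! l[i+2]!) ↔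
      ∀ i (hi : i + 2 < l.length), P l[i] l[i+1] l[i+2] := by
  refine forall_congr' fun i => forall_congr' fun hi => ?_
  rw [getElem!_pos l i (by omega), getElem!_pos l (i + 1) (by omega), getElem!_pos l (i + 2) hi]

theorem count_add_count_add_count (l : List ℕ) (j : ℕ) :
    l.count j + l.count (j + 1) + l.count (j + 2) =
      l.countP (fun x => j ≤ x ∧ x ≤ j + 2) := by
  induction l with
  | nil => rfl
  | cons a t ih =>
    simp only [count_cons, countP_cons, ← ih, beq_iff_eq, decide_eq_true_eq]
    split_ifs <;> omega

theorem exists_orderEmbedding_of_le_countP {α : Type*} {p : α → Bool} {l : List α} {n : ℕ}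
    (h : n ≤ l.countP p) : ∃ f : Fin n ↪o Fin l.length, ∀ k, p (l.get (f k)) := by
  obtain ⟨f, hf⟩ :=
    sublist_iff_exists_fin_orderEmbedding_get_eq.mp (filter_sublist (p := p) (l := l))
  rw [countP_eq_length_filter] at h
  refine ⟨(Fin.castLEOrderEmb h).trans f, fun k => ?_⟩
  rw [RelEmbedding.trans_apply, ← hf]
  exact of_mem_filter (get_mem _ _)

theorem le_countP_of_forall_getElem_add {α : Type*} {p : α → Bool} {l : List α} {i n : ℕ}
    (hn : i + n ≤ l.length) (h : ∀ k (hk : k < n), p l[i + k]) : n ≤ l.countP p := by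
  have hsub : (l.drop i).take n <+ l := (take_sublist _ _).trans (drop_sublist _ _)
  have hall : ((l.drop i).take n).countP p = n := by
    rw [countP_eq_length.mpr, length_take, length_drop]
    · omega
    · intro a ha
      obtain ⟨m, hm, rfl⟩ := mem_iff_getElem.mp ha
      simp only [length_take, length_drop] at hm
      simpa using h m (by omega)
  exact hall ▸ hsub.countP_le

namespace SortedGE

variable {l : List ℕ}

theorem forall_countP_window_le_two_iff (hl : l.SortedGE) :
    (∀ j, l.countP (fun x => j ≤ x ∧ x ≤ j + 2) ≤ 2) ↔
      ∀ i (hi : i + 2 < l.length), l[i+2] + 3 ≤ l[i] := by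
  constructor
  · intro h i hi
    by_contra! hlt
    have hwindow : 3 ≤ l.countP (fun x => l[i+2] ≤ x ∧ x ≤ l[i+2] + 2) :=
      le_countP_of_forall_getElem_add hi fun k hk => by
        have hlo : l[i+2] ≤ l[i+k] := hl.getElem_ge_getElem_of_le (by omega)
        have hhi : l[i+k] ≤ l[i] := hl.getElem_ge_getElem_of_le (by omega)
        simp only [decide_eq_true_eq]
        omega
    exact absurd (h l[i+2]) (by omega)
  · intro h j
    by_contra! hlt
    obtain ⟨f, hf⟩ := exists_orderEmbedding_of_le_countP (n := 3) hlt
    have h01 : f 0 < f 1 := f.strictMono (by decide)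
    have h12 : f 1 < f 2 := f.strictMono (by decide)
    have h2 : (f 0 : ℕ) + 2 < l.length := by have := (f 2).isLt; omega
    have hmono : l[(f 2 : ℕ)] ≤ l[(f 0 : ℕ) + 2] := hl.getElem_ge_getElem_of_le (by omega)
    have hf0 := hf 0
    have hf2 := hf 2
    simp only [get_eq_getElem, decide_eq_true_eq] at hf0 hf2
    have := h _ h2
    omega

theorem count_eq_zero_of_lt_of_lt (hl : l.SortedGE) {i v : ℕ} (hi : i + 1 < l.length)
    (hlo : l[i+1] < v) (hhi : v < l[i]) : l.count v = 0 := by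
  refine count_eq_zero.mpr fun hv => ?_
  obtain ⟨m, hm, rfl⟩ := mem_iff_getElem.mp hv
  rcases le_or_gt m i with hmi | hmi
  · have : l[i] ≤ l[m] := hl.getElem_ge_getElem_of_le hmi
    omega
  · have : l[m] ≤ l[i+1] := hl.getElem_ge_getElem_of_le hmi
    omega

theorem exists_gap_of_getElem (hl : l.SortedGE) (hpos : ∀ x ∈ l, 0 < x) {i : ℕ}
    (hi : i + 2 < l.length) (hdiff : l[i] - l[i+2] = 3) (heq : l[i] = l[i+1]) :
    ∃ j, 1 ≤ j ∧ 1 ≤ l.count j ∧ l.count (j + 1) = 0 ∧ l.count (j + 2) = 0 ∧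
      2 ≤ l.count (j + 3) := by
  have hle : l[i+2] ≤ l[i] := hl.getElem_ge_getElem_of_le (by omega)
  have hnext : l[i+1+1] = l[i+2] := rfl
  refine ⟨l[i+2], hpos _ (getElem_mem _), count_pos_iff.mpr (getElem_mem _), ?_, ?_, ?_⟩
  · exact hl.count_eq_zero_of_lt_of_lt (i := i + 1) hi (by omega) (by omega)
  · exact hl.count_eq_zero_of_lt_of_lt (i := i + 1) hi (by omega) (by omega)
  · refine le_countP_of_forall_getElem_add (i := i) (by omega) fun k hk => ?_
    have hlo : l[i+1] ≤ l[i+k] := hl.getElem_ge_getElem_of_le (by omega)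
    have hhi : l[i+k] ≤ l[i] := hl.getElem_ge_getElem_of_le (by omega)
    simp only [beq_iff_eq]
    omega

theorem exists_getElem_of_gap (hl : l.SortedGE)
    (hN2 : ∀ i (hi : i + 2 < l.length), l[i+2] + 3 ≤ l[i]) {j : ℕ}
    (hj : 1 ≤ l.count j) (hj3 : 2 ≤ l.count (j + 3)) :
    ∃ i, ∃ hi : i + 2 < l.length, l[i] - l[i+2] = 3 ∧ l[i] = l[i+1] := by
  obtain ⟨f, hf⟩ := exists_orderEmbedding_of_le_countP (n := 2) hj3
  obtain ⟨c, hc, hcj⟩ := mem_iff_getElem.mp (count_pos_iff.mp hj)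
  have hab : f 0 < f 1 := f.strictMono (by decide)
  have hfa := hf 0
  have hfb := hf 1
  generalize f 0 = a at hab hfa
  generalize f 1 = b at hab hfb
  obtain ⟨a, ha⟩ := a
  obtain ⟨b, hb⟩ := b
  simp only [get_eq_getElem, beq_iff_eq, Fin.mk_lt_mk] at hfa hfb hab
  have hbc : b < c := by
    by_contra! hcb
    have : l[b] ≤ l[c] := hl.getElem_ge_getElem_of_le hcb
    omega
  have hi : a + 2 < l.length := by omega
  have h1a : l[a+1] ≤ l[a] := hl.getElem_ge_getElem_of_le (by omega)
  have hb1 : l[b] ≤ l[a+1] := hl.getElem_ge_getElem_of_le (by omega)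
  have hc2 : l[c] ≤ l[a+2] := hl.getElem_ge_getElem_of_le (by omega)
  have := hN2 a hi
  exact ⟨a, hi, by omega, by omega⟩

end SortedGE

end List

open List in
/-- For a partition `λ` (weakly decreasing list of positive
integers) with multiplicities `f_j = count of j`, the conjunction of
(N2): `λ_i − λ_{i+2} ≥ 3` for all `i`, and
(N3): `λ_i − λ_{i+2} = 3 → λ_i ≠ λ_{i+1}`,
is equivalent to: `f_j + f_{j+1} + f_{j+2} ≤ 2` for all `j`, and there is no
`j ≥ 1` with `f_j ≥ 1`, `f_{j+1} = f_{j+2} = 0` and `f_{j+3} ≥ 2`. -/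
theorem stmt5 (l : List ℕ) (hpos : ∀ x ∈ l, 0 < x) (hsort : l.Pairwise (· ≥ ·)) :
    ((∀ i, i + 2 < l.length → l[i+2]! + 3 ≤ l[i]!) ∧
     (∀ i, i + 2 < l.length → l[i]! - l[i+2]! = 3 → l[i]! ≠ l[i+1]!))
      ↔ ((∀ j : ℕ, l.count j + l.count (j + 1) + l.count (j + 2) ≤ 2) ∧
         ¬ ∃ j : ℕ, 1 ≤ j ∧ 1 ≤ l.count j ∧ l.count (j + 1) = 0 ∧
            l.count (j + 2) = 0 ∧ 2 ≤ l.count (j + 3)) := by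
  have hl := hsort.sortedGE
  rw [forall_getElem!_iff (P := fun a _ c => c + 3 ≤ a),
    forall_getElem!_iff (P := fun a b c => a - c = 3 → a ≠ b)]
  simp only [count_add_count_add_count, hl.forall_countP_window_le_two_iff]
  constructor
  · rintro ⟨hN2, hN3⟩
    refine ⟨hN2, ?_⟩
    rintro ⟨j, -, hj, -, -, hj3⟩
    obtain ⟨i, hi, hdiff, heq⟩ := hl.exists_getElem_of_gap hN2 hj hj3
    exact hN3 i hi hdiff heq
  · rintro ⟨hN2, hgap⟩
    exact ⟨hN2, fun i hi hdiff heq => hgap (hl.exists_gap_of_getElem hpos hi hdiff heq)⟩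
end

section
/- Let Σ be a nonempty finite alphabet, and let A, X ⊆ Σ^+ satisfy Σ*XΣ* ⊆ A and A = AΣ*. Define X' = (A ∩ (A^c Σ)) \ Σ*X. Then X' is the unique minimal (with respect to inclusion) subset B ⊆ Σ* such that A = Σ*XΣ* ∪ BΣ*. -/
/-- `Σ*XΣ*`: words containing a factor in `X`. -/
def factorLang {Alph : Type*} (X : Set (List Alph)) : Set (List Alph) :=
  {w | ∃ u x v : List Alph, x ∈ X ∧ w = u ++ x ++ v}

/-- `BΣ*`: words with a prefix in `B`. -/
def prefLang {Alph : Type*} (B : Set (List Alph)) : Set (List Alph) :=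
  {w | ∃ b ∈ B, ∃ u : List Alph, w = b ++ u}

/-- If `A, X ⊆ Σ⁺`, `Σ*XΣ* ⊆ A` and `A = AΣ*`, then
`X' = (A ∩ A^cΣ) \ Σ*X` is the minimum subset `B` (with respect to inclusion)
such that `A = Σ*XΣ* ∪ BΣ*`. -/
theorem stmt11 {Alph : Type*} [Fintype Alph] [Nonempty Alph]
    (A X : Set (List Alph)) (hAne : ∀ w ∈ A, w ≠ []) (hXne : ∀ w ∈ X, w ≠ [])
    (h1 : factorLang X ⊆ A) (h2 : A = prefLang A) :
    (A = factorLang X ∪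
        prefLang (({w ∈ A | ∃ (w' : List Alph) (a : Alph), w = w' ++ [a] ∧ w' ∉ A}
          \ {w | ∃ (u x : List Alph), x ∈ X ∧ w = u ++ x}))) ∧
    ∀ B : Set (List Alph), A = factorLang X ∪ prefLang B →
      ({w ∈ A | ∃ (w' : List Alph) (a : Alph), w = w' ++ [a] ∧ w' ∉ A}
          \ {w | ∃ (u x : List Alph), x ∈ X ∧ w = u ++ x}) ⊆ B := by
  classical
  constructor
  · ext w
    constructor
    · intro hw
      by_cases hf : w ∈ factorLang X
      · exact Or.inl hf
      · right
        have hex : ∃ n, w.take n ∈ A := ⟨w.length, by simpa using hw⟩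
        set n := Nat.find hex with hn
        have hp : w.take n ∈ A := Nat.find_spec hex
        have hle : n ≤ w.length := Nat.find_le (by simpa using hw)
        have hpne : w.take n ≠ [] := hAne _ hp
        have hlen : (w.take n).length = n := by
          simp [List.length_take, Nat.min_eq_left hle]
        -- dropLast of the prefix is not in A
        have hdl : (w.take n).dropLast ∉ A := by
          intro hmem
          have hpre : (w.take n).dropLast <+: w :=
            (List.dropLast_prefix _).trans (List.take_prefix _ _)
          have heq : (w.take n).dropLast = w.take ((w.take n).dropLast).length :=
            List.prefix_iff_eq_take.mp hpre
          have hlt : ((w.take n).dropLast).length < n := by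
            rw [List.length_dropLast, hlen]
            exact Nat.sub_lt (by
              rcases Nat.eq_zero_or_pos n with h0 | h0
              · exfalso; apply hpne; simp [h0]
              · exact h0) one_pos
          exact Nat.find_min hex hlt (heq ▸ hmem)
        refine ⟨w.take n, ⟨⟨hp, (w.take n).dropLast, (w.take n).getLast hpne,
          (List.dropLast_append_getLast hpne).symm, hdl⟩, ?_⟩, w.drop n,
          (List.take_append_drop n w).symm⟩
        rintro ⟨u, x, hx, heq⟩
        refine hf ⟨u, x, w.drop n, hx, ?_⟩
        conv_lhs => rw [← List.take_append_drop n w]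
        rw [heq, List.append_assoc]
    · rintro (hf | ⟨b, ⟨⟨hbA, _⟩, _⟩, u, rfl⟩)
      · exact h1 hf
      · rw [h2]; exact ⟨b, hbA, u, rfl⟩
  · intro B hB w hw
    obtain ⟨⟨hwA, w', a, rfl, hw'⟩, hwn⟩ := hw
    have hm : w' ++ [a] ∈ factorLang X ∪ prefLang B := hB ▸ hwA
    have hprefA : prefLang B ⊆ A := by
      rw [hB]; exact Set.subset_union_right
    rcases hm with ⟨u, x, v, hx, heq⟩ | ⟨b, hb, u, heq⟩
    · rcases eq_or_ne v [] with rfl | hv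
      · exact absurd ⟨u, x, hx, by simpa using heq⟩ hwn
      · exfalso
        apply hw'
        have heq2 : w' ++ [a] = (u ++ x ++ v.dropLast) ++ [v.getLast hv] := by
          rw [heq]
          simp [List.dropLast_append_getLast hv]
        have : w' = u ++ x ++ v.dropLast := by
          have := congrArg List.dropLast heq2
          simpa using this
        exact h1 ⟨u, x, v.dropLast, hx, this⟩
    · rcases eq_or_ne u [] with rfl | hu
      · have : w' ++ [a] = b := by simpa using heq
        exact this ▸ hb
      · exfalso
        apply hw'
        have heq2 : w' ++ [a] = (b ++ u.dropLast) ++ [u.getLast hu] := by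
          rw [heq]
          simp [List.dropLast_append_getLast hu]
        have hw'e : w' = b ++ u.dropLast := by
          have := congrArg List.dropLast heq2
          simpa using this
        exact hprefA ⟨b, hb, u.dropLast, hw'e⟩
end

section
/- Euler's identity: for |q| < 1 and |x| < 1 (or as an identity of formal power series in x and q), the sum over n ≥ 0 of x^n / ((1−q)(1−q^2)⋯(1−q^n)) equals the infinite product ∏_{j≥0} 1/(1 − x q^j). -/
/-!
Write `S(y) = ∑ yⁿ / (q;q)_n`. Since `1/(q;q)_n` is bounded, `S` converges for `‖y‖ < 1` and is
continuous at `0` with `S(0) = 1`. Termwise, `S(y) - S(yq) = y S(y)`, so `S(x qᴺ) = (x;q)_N S(x)`;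
letting `N → ∞` gives `1 = (x;q)_∞ S(x)`.
-/

open Filter Topology Finset

section EulerIdentity

variable {𝕜 : Type*} [NormedField 𝕜]

/-- The `q`-Pochhammer symbol `(q;q)_n`. -/
def qPochhammer (q : 𝕜) (n : ℕ) : 𝕜 :=
  ∏ j ∈ range n, (1 - q ^ (j + 1))

noncomputable def eulerSum (q y : 𝕜) : 𝕜 :=
  ∑' n : ℕ, y ^ n / qPochhammer q n

lemma qPochhammer_succ (q : 𝕜) (n : ℕ) :
    qPochhammer q (n + 1) = qPochhammer q n * (1 - q ^ (n + 1)) :=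
  prod_range_succ _ _

lemma summable_norm_mul_pow (a : 𝕜) {q : 𝕜} (hq : ‖q‖ < 1) :
    Summable fun j : ℕ ↦ ‖a * q ^ j‖ := by
  simpa only [norm_mul, norm_pow] using
    (summable_geometric_of_lt_one (norm_nonneg q) hq).mul_left ‖a‖

lemma norm_mul_pow_lt_one {a q : 𝕜} (ha : ‖a‖ < 1) (hq : ‖q‖ ≤ 1) (j : ℕ) :
    ‖a * q ^ j‖ < 1 := by
  rw [norm_mul, norm_pow]
  exact mul_lt_one_of_nonneg_of_lt_one_left (norm_nonneg a) ha (pow_le_one₀ (norm_nonneg q) hq)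

lemma one_sub_mul_pow_ne_zero {a q : 𝕜} (ha : ‖a‖ < 1) (hq : ‖q‖ ≤ 1) (j : ℕ) :
    1 - a * q ^ j ≠ 0 := by
  intro h
  simpa [← sub_eq_zero.mp h] using norm_mul_pow_lt_one ha hq j

lemma one_sub_pow_succ_ne_zero {q : 𝕜} (hq : ‖q‖ < 1) (j : ℕ) : 1 - q ^ (j + 1) ≠ 0 := by
  simpa [← pow_succ'] using one_sub_mul_pow_ne_zero hq hq.le j

lemma qPochhammer_ne_zero {q : 𝕜} (hq : ‖q‖ < 1) (n : ℕ) : qPochhammer q n ≠ 0 :=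
  prod_ne_zero_iff.mpr fun j _ ↦ one_sub_pow_succ_ne_zero hq j

/-- The numerator `y^(n+1) (1 - q^(n+1))` cancels the last factor of `(q;q)_(n+1)`. -/
lemma pow_succ_div_qPochhammer_sub {q : 𝕜} (hq : ‖q‖ < 1) (y : 𝕜) (n : ℕ) :
    y ^ (n + 1) / qPochhammer q (n + 1) - (y * q) ^ (n + 1) / qPochhammer q (n + 1)
      = y * (y ^ n / qPochhammer q n) := by
  have := one_sub_pow_succ_ne_zero hq n
  have := qPochhammer_ne_zero hq n
  rw [qPochhammer_succ]
  field_simp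
  ring

lemma eulerSum_zero (q : 𝕜) : eulerSum q 0 = 1 := by
  rw [eulerSum, tsum_eq_single 0 fun n hn ↦ by simp [hn]]
  simp [qPochhammer]

lemma norm_pow_div_qPochhammer_le {q : 𝕜} {C : ℝ} (hC : ∀ n, ‖(qPochhammer q n)⁻¹‖ ≤ C)
    (y : 𝕜) (n : ℕ) : ‖y ^ n / qPochhammer q n‖ ≤ C * ‖y‖ ^ n := by
  rw [div_eq_mul_inv, norm_mul, norm_pow, mul_comm]
  exact mul_le_mul_of_nonneg_right (hC n) (by positivity)

variable [CompleteSpace 𝕜]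

lemma hasProd_one_sub_mul_pow (a : 𝕜) {q : 𝕜} (hq : ‖q‖ < 1) :
    HasProd (fun j : ℕ ↦ 1 - a * q ^ j) (∏' j : ℕ, (1 - a * q ^ j)) := by
  simp_rw [sub_eq_add_neg]
  exact (multipliable_one_add_of_summable (by simpa using summable_norm_mul_pow a hq)).hasProd

lemma tprod_one_sub_mul_pow_ne_zero {a q : 𝕜} (ha : ‖a‖ < 1) (hq : ‖q‖ < 1) :
    ∏' j : ℕ, (1 - a * q ^ j) ≠ 0 := by
  simp_rw [sub_eq_add_neg]
  exact tprod_one_add_ne_zero_of_summable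
    (fun j ↦ by simpa [sub_eq_add_neg] using one_sub_mul_pow_ne_zero ha hq.le j)
    (by simpa using summable_norm_mul_pow a hq)

/-- `(q;q)_n` tends to the nonzero limit `(q;q)_∞`. -/
lemma exists_forall_norm_inv_qPochhammer_le {q : 𝕜} (hq : ‖q‖ < 1) :
    ∃ C, ∀ n, ‖(qPochhammer q n)⁻¹‖ ≤ C := by
  have hlim := ((hasProd_one_sub_mul_pow q hq).tendsto_prod_nat).inv₀
    (tprod_one_sub_mul_pow_ne_zero hq hq)
  simp_rw [← pow_succ'] at hlim
  obtain ⟨C, hC⟩ := isBounded_iff_forall_norm_le.mp (Metric.isBounded_range_of_tendsto _ hlim)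
  exact ⟨C, fun n ↦ hC _ (Set.mem_range_self n)⟩

lemma summable_pow_div_qPochhammer {q y : 𝕜} (hq : ‖q‖ < 1) (hy : ‖y‖ < 1) :
    Summable fun n : ℕ ↦ y ^ n / qPochhammer q n := by
  obtain ⟨C, hC⟩ := exists_forall_norm_inv_qPochhammer_le hq
  exact .of_norm_bounded ((summable_geometric_of_lt_one (norm_nonneg y) hy).mul_left C)
    (norm_pow_div_qPochhammer_le hC y)

lemma continuousAt_eulerSum_zero {q : 𝕜} (hq : ‖q‖ < 1) : ContinuousAt (eulerSum q) 0 := by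
  obtain ⟨C, hC⟩ := exists_forall_norm_inv_qPochhammer_le hq
  have hC₀ : 0 ≤ C := (norm_nonneg _).trans (hC 0)
  have hsmall : ∀ᶠ y in 𝓝 (0 : 𝕜), ‖y‖ ≤ 2⁻¹ :=
    tendsto_norm_zero.eventually (eventually_le_nhds (by norm_num))
  refine tendsto_tsum_of_dominated_convergence
    ((summable_geometric_of_lt_one (by norm_num) (by norm_num : (2⁻¹ : ℝ) < 1)).mul_left C)
    (fun n ↦ ((continuous_pow n).div_const _).continuousAt) ?_
  filter_upwards [hsmall] with y hy n
  exact (norm_pow_div_qPochhammer_le hC y n).trans (by gcongr)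

lemma eulerSum_mul_right_eq {q y : 𝕜} (hq : ‖q‖ < 1) (hy : ‖y‖ < 1) :
    eulerSum q (y * q) = (1 - y) * eulerSum q y := by
  have hf := (summable_pow_div_qPochhammer hq hy).hasSum
  have hdiff : HasSum (fun n ↦ y ^ n / qPochhammer q n - (y * q) ^ n / qPochhammer q n)
      (y * eulerSum q y) := by
    have hshift := hf.mul_left y
    simp_rw [← pow_succ_div_qPochhammer_sub hq] at hshift
    have := (hasSum_nat_add_iff (f := fun n ↦
      y ^ n / qPochhammer q n - (y * q) ^ n / qPochhammer q n) 1).mp hshift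
    simpa [eulerSum] using this
  have hyq := hf.sub hdiff
  simp only [sub_sub_cancel] at hyq
  rw [eulerSum, hyq.tsum_eq, eulerSum]
  ring

lemma eulerSum_mul_pow_eq {q x : 𝕜} (hq : ‖q‖ < 1) (hx : ‖x‖ < 1) (N : ℕ) :
    eulerSum q (x * q ^ N) = (∏ j ∈ range N, (1 - x * q ^ j)) * eulerSum q x := by
  induction N with
  | zero => simp
  | succ N ih =>
    rw [pow_succ, ← mul_assoc, eulerSum_mul_right_eq hq (norm_mul_pow_lt_one hx hq.le N), ih,
      prod_range_succ]
    ring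

theorem eulerSum_eq_tprod_inv {q x : 𝕜} (hq : ‖q‖ < 1) (hx : ‖x‖ < 1) :
    eulerSum q x = ∏' j : ℕ, (1 - x * q ^ j)⁻¹ := by
  have hprod := hasProd_one_sub_mul_pow x hq
  have hlim : Tendsto (fun N ↦ eulerSum q (x * q ^ N)) atTop
      (𝓝 ((∏' j : ℕ, (1 - x * q ^ j)) * eulerSum q x)) := by
    simp_rw [eulerSum_mul_pow_eq hq hx]
    exact hprod.tendsto_prod_nat.mul_const _
  have hlim_one : Tendsto (fun N ↦ eulerSum q (x * q ^ N)) atTop (𝓝 1) := by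
    rw [← eulerSum_zero q]
    refine (continuousAt_eulerSum_zero hq).tendsto.comp ?_
    simpa using (tendsto_pow_atTop_nhds_zero_of_norm_lt_one hq).const_mul x
  have hone := tendsto_nhds_unique hlim hlim_one
  rw [hprod.multipliable.tprod_inv₀ (left_ne_zero_of_mul_eq_one hone)]
  exact eq_inv_of_mul_eq_one_right hone

end EulerIdentity

/-- Euler's identity: for `‖q‖ < 1` and `‖x‖ < 1`,
`∑_{n≥0} xⁿ/(q;q)_n = 1/(x;q)_∞ = ∏_{j≥0} (1 − x qʲ)⁻¹`. -/
theorem stmt13 (x q : ℂ) (hq : ‖q‖ < 1) (hx : ‖x‖ < 1) :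
    ∑' n : ℕ, x ^ n / (∏ j ∈ Finset.range n, (1 - q ^ (j + 1)))
      = ∏' j : ℕ, (1 - x * q ^ j)⁻¹ :=
  eulerSum_eq_tprod_inv hq hx
end
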